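/- arXiv:2503.13085 — 2 statements merged into one kernel-verified Lean document; each statement's English description precedes it below -/
import Mathlib

section
/- Let V be a set of vertices containing an end-depot vertex d, let t : V × V → ℝ be nonnegative travel times satisfying the triangle inequality t(j, d) ≤ t(j, k) + t(k, d) for all j, k ∈ V, and let u : V → ℝ be nonnegative service times. Consider a route v₀, v₁, …, v_m with v_m = d together with a schedule B such that B(v_{r+1}) ≥ B(v_r) + u(v_r) + t(v_r, v_{r+1}) for every consecutive pair and B(d) ≤ l_d. Then B(v_r) ≤ l_d − u(v_r) − t(v_r, d) for every r < m. Consequently, replacing each latest service time l_i by min(l_i, l_d − u_i − t(i, d)) does not eliminate any feasible schedule. -/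
/-!
Backward along the route, `B(v r) + u(v r) + t(v r, d) ≤ B(d)`: the service at `v r` plus the
direct trip to `d` is no longer than the service at `v r`, the trip to `v (r+1)`, the (nonnegative)
service there and the remaining direct trip to `d`, by the triangle inequality.
-/

theorem add_service_add_travel_le_of_route {V : Type*} {d : V} {t : V → V → ℝ} {u B : V → ℝ}
    (htri : ∀ j k : V, t j d ≤ t j k + t k d) (hu : ∀ j, 0 ≤ u j)
    {n : ℕ} {v : ℕ → V} (hvn : v (n + 1) = d)
    (hstep : ∀ r ≤ n, B (v r) + u (v r) + t (v r) (v (r + 1)) ≤ B (v (r + 1)))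
    {r : ℕ} (hr : r ≤ n) :
    B (v r) + u (v r) + t (v r) d ≤ B d := by
  induction hr using Nat.decreasingInduction with
  | self => simpa only [hvn] using hstep n le_rfl
  | of_succ k hk ih =>
    linarith [htri (v k) (v (k + 1)), hu (v (k + 1)), hstep k hk.le]

theorem backward_time_window_tightening_general {V : Type*}
    (d : V) (t : V → V → ℝ) (u : V → ℝ) (l_d : ℝ)
    (htri : ∀ j k : V, t j d ≤ t j k + t k d)
    (hu : ∀ j, 0 ≤ u j)
    (m : ℕ) (v : ℕ → V) (hvm : v m = d)
    (B : V → ℝ)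
    (hBd : B d ≤ l_d)
    (hstep : ∀ r < m, B (v r) + u (v r) + t (v r) (v (r + 1)) ≤ B (v (r + 1))) :
    (∀ r < m, B (v r) ≤ l_d - u (v r) - t (v r) d) ∧
    (∀ l : V → ℝ, (∀ r ≤ m, B (v r) ≤ l (v r)) →
      ∀ r < m, B (v r) ≤ min (l (v r)) (l_d - u (v r) - t (v r) d)) := by
  have depot_bound : ∀ r < m, B (v r) ≤ l_d - u (v r) - t (v r) d := by
    intro r hr
    obtain ⟨n, rfl⟩ := Nat.exists_eq_add_one_of_ne_zero (Nat.ne_zero_of_lt hr)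
    have := add_service_add_travel_le_of_route htri hu hvm
      (fun k hk => hstep k (Nat.lt_succ_of_le hk)) (Nat.le_of_lt_succ hr)
    linarith
  exact ⟨depot_bound, fun l hl r hr => le_min (hl r hr.le) (depot_bound r hr)⟩

/-- Validity of the backward time-window tightening rule.  Let `t` be nonnegative travel
times satisfying the triangle inequality towards the end depot `d`, and `u` nonnegative
service times.  Consider a route `v 0, v 1, …, v m` ending at the depot (`v m = d`) with a
schedule `B` satisfying `B(v (r+1)) ≥ B(v r) + u(v r) + t(v r, v (r+1))` for every
consecutive pair and `B(d) ≤ l_d`.  Then `B(v r) ≤ l_d - u(v r) - t(v r, d)` for every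
`r < m`; consequently, replacing each latest service time `l i` by
`min (l i) (l_d - u i - t(i, d))` does not eliminate any feasible schedule. -/
theorem backward_time_window_tightening {V : Type*}
    (d : V) (t : V → V → ℝ) (u : V → ℝ) (l_d : ℝ)
    (ht : ∀ j k, 0 ≤ t j k)
    (htri : ∀ j k : V, t j d ≤ t j k + t k d)
    (hu : ∀ j, 0 ≤ u j)
    (m : ℕ) (v : ℕ → V) (hvm : v m = d)
    (B : V → ℝ)
    (hBd : B d ≤ l_d)
    (hstep : ∀ r < m, B (v r) + u (v r) + t (v r) (v (r + 1)) ≤ B (v (r + 1))) :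
    (∀ r < m, B (v r) ≤ l_d - u (v r) - t (v r) d) ∧
    (∀ l : V → ℝ, (∀ r ≤ m, B (v r) ≤ l (v r)) →
      ∀ r < m, B (v r) ≤ min (l (v r)) (l_d - u (v r) - t (v r) d)) :=
  backward_time_window_tightening_general d t u l_d htri hu m v hvm B hBd hstep
end

section
/- Let n+i and n+j be two drop-off vertices, i and j the respective companion pickup vertices of two other requests, and s a charger vertex that appears at most once among all routes of a solution. Suppose both detour paths are time-window infeasible, i.e., e(n+i) + u(n+i) + t(n+i, s) + u(s) + t(s, j) > l(j) and e(n+j) + u(n+j) + t(n+j, s) + u(s) + t(s, i) > l(i). Then in any solution whose routes admit schedules B with B(v) ≥ e(v) and B(v) ≤ l(v) at pickup/drop-off vertices and B(v_{r+1}) ≥ B(v_r) + u(v_r) + t(v_r, v_{r+1}) for consecutive vertices, at most one of the four arcs (n+i → s), (s → j), (n+j → s), (s → i) appears as a consecutive pair on a route. Hence the valid inequality that the total usage of these four arcs is bounded by 1 does not cut off any feasible solution. -/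
/-!
Since `s` is visited at most once, two of the four arcs can only both be used around the same
visit of `s`. Two arcs into `s` (or two out of `s`) then share an endpoint, which would force
`di = dj` (or `pi = pj`). An arc into `s` followed by one out of `s` is a path `d → s → p`: for
`di → s → pj` and `dj → s → pi` the schedule cannot meet the time windows, and for
`di → s → pi` and `dj → s → pj` the pickup, which has to precede its drop-off, would be
visited a second time.
-/

namespace Routes

variable {V K : Type*} (m : K → ℕ) (v : K → ℕ → V)

def UsedArc (x y : V) : Prop :=
  ∃ k r, r + 1 ≤ m k ∧ v k r = x ∧ v k (r + 1) = y

def VisitedAtMostOnce (x : V) : Prop :=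
  ∀ k k' r r', r ≤ m k → r' ≤ m k' → v k r = x → v k' r' = x → k = k' ∧ r = r'

variable {m v} {s x y : V}

namespace VisitedAtMostOnce

theorem eq_of_usedArc_to (hs : VisitedAtMostOnce m v s)
    (hx : UsedArc m v x s) (hy : UsedArc m v y s) : x = y := by
  obtain ⟨k, r, hr, rfl, hxs⟩ := hx
  obtain ⟨k', r', hr', rfl, hys⟩ := hy
  obtain ⟨rfl, hrr'⟩ := hs k k' (r + 1) (r' + 1) hr hr' hxs hys
  rw [Nat.succ_injective hrr']

theorem eq_of_usedArc_from (hs : VisitedAtMostOnce m v s)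
    (hx : UsedArc m v s x) (hy : UsedArc m v s y) : x = y := by
  obtain ⟨k, r, hr, hsx, rfl⟩ := hx
  obtain ⟨k', r', hr', hsy, rfl⟩ := hy
  obtain ⟨rfl, rfl⟩ := hs k k' r r' (by omega) (by omega) hsx hsy
  rfl

theorem exists_path_of_usedArc (hs : VisitedAtMostOnce m v s)
    (hx : UsedArc m v x s) (hy : UsedArc m v s y) :
    ∃ k r, r + 2 ≤ m k ∧ v k r = x ∧ v k (r + 1) = s ∧ v k (r + 2) = y := by
  obtain ⟨k, r, hr, hxr, hsr⟩ := hx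
  obtain ⟨k', r', hr', hsr', hyr'⟩ := hy
  obtain ⟨rfl, rfl⟩ := hs k k' (r + 1) r' hr (by omega) hsr hsr'
  exact ⟨k, r, hr', hxr, hsr, hyr'⟩

end VisitedAtMostOnce

theorem not_usedArc_detour_of_lt {d p : V} {B : K → ℕ → ℝ} {u : V → ℝ} {t : V → V → ℝ}
    {a b : ℝ} (hstep : ∀ k, ∀ r < m k, B k r + u (v k r) + t (v k r) (v k (r + 1)) ≤ B k (r + 1))
    (hs : VisitedAtMostOnce m v s)
    (hd : ∀ k, ∀ r ≤ m k, v k r = d → a ≤ B k r)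
    (hp : ∀ k, ∀ r ≤ m k, v k r = p → B k r ≤ b)
    (hinf : b < a + u d + t d s + u s + t s p) :
    ¬(UsedArc m v d s ∧ UsedArc m v s p) := by
  rintro ⟨hds, hsp⟩
  obtain ⟨k, r, hr, hvd, hvs, hvp⟩ := hs.exists_path_of_usedArc hds hsp
  have hstep₁ := hstep k r (by omega)
  have hstep₂ := hstep k (r + 1) (by omega)
  rw [hvd, hvs] at hstep₁
  rw [hvs, hvp] at hstep₂
  linarith [hd k r (by omega) hvd, hp k (r + 2) hr hvp]

theorem not_usedArc_detour_of_precedes {d p : V}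
    (hs : VisitedAtMostOnce m v s) (hp : VisitedAtMostOnce m v p)
    (hprec : ∀ k, ∀ r ≤ m k, v k r = d → ∃ r' < r, v k r' = p) :
    ¬(UsedArc m v d s ∧ UsedArc m v s p) := by
  rintro ⟨hds, hsp⟩
  obtain ⟨k, r, hr, hvd, -, hvp⟩ := hs.exists_path_of_usedArc hds hsp
  obtain ⟨q, hqr, hvq⟩ := hprec k r (by omega) hvd
  have := (hp k k q (r + 2) (by omega) hr hvq hvp).2
  omega

end Routes

theorem charger_valid_inequality_general {V K : Type*}
    (pi pj di dj s : V)
    (t : V → V → ℝ) (u : V → ℝ) (e l : V → ℝ)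
    -- the five vertices are pairwise distinct
    (hpipj : pi ≠ pj)
    (hdidj : di ≠ dj)
    -- both detour paths are time-window infeasible
    (hinfeas₁ : l pj < e di + u di + t di s + u s + t s pj)
    (hinfeas₂ : l pi < e dj + u dj + t dj s + u s + t s pi)
    -- a solution: a family of routes `v k` of length `m k` with schedules `B k`
    (m : K → ℕ) (v : K → ℕ → V) (B : K → ℕ → ℝ)
    (hstep : ∀ k, ∀ r < m k,
      B k r + u (v k r) + t (v k r) (v k (r + 1)) ≤ B k (r + 1))
    -- time windows hold at the four pickup/drop-off vertices
    (htw : ∀ k, ∀ r ≤ m k,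
      (v k r = pi ∨ v k r = pj ∨ v k r = di ∨ v k r = dj) →
        e (v k r) ≤ B k r ∧ B k r ≤ l (v k r))
    -- the charger vertex `s` appears at most once among all routes
    (hs_once : ∀ k k' r r', r ≤ m k → r' ≤ m k' →
      v k r = s → v k' r' = s → k = k' ∧ r = r')
    -- each pickup vertex is visited at most once among all routes
    (hpi_once : ∀ k k' r r', r ≤ m k → r' ≤ m k' →
      v k r = pi → v k' r' = pi → k = k' ∧ r = r')
    (hpj_once : ∀ k k' r r', r ≤ m k → r' ≤ m k' →
      v k r = pj → v k' r' = pj → k = k' ∧ r = r')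
    -- precedence: a drop-off is visited after its pickup on the same route
    (hprec_i : ∀ k, ∀ r ≤ m k, v k r = di → ∃ r' < r, v k r' = pi)
    (hprec_j : ∀ k, ∀ r ≤ m k, v k r = dj → ∃ r' < r, v k r' = pj) :
    -- at most one of the four arcs is used
    let UsedArc : V → V → Prop :=
      fun x y => ∃ k, ∃ r, r + 1 ≤ m k ∧ v k r = x ∧ v k (r + 1) = y
    ¬(UsedArc di s ∧ UsedArc s pj) ∧ ¬(UsedArc di s ∧ UsedArc dj s) ∧
    ¬(UsedArc di s ∧ UsedArc s pi) ∧ ¬(UsedArc s pj ∧ UsedArc dj s) ∧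
    ¬(UsedArc s pj ∧ UsedArc s pi) ∧ ¬(UsedArc dj s ∧ UsedArc s pi) := by
  intro UsedArc
  have hs : Routes.VisitedAtMostOnce m v s := hs_once
  have hwin : ∀ x, (x = pi ∨ x = pj ∨ x = di ∨ x = dj) →
      ∀ k, ∀ r ≤ m k, v k r = x → e x ≤ B k r ∧ B k r ≤ l x := by
    rintro x hx k r hr rfl
    exact htw k r hr hx
  refine ⟨?_, fun h => hdidj (hs.eq_of_usedArc_to h.1 h.2),
    Routes.not_usedArc_detour_of_precedes hs hpi_once hprec_i,
    fun h => Routes.not_usedArc_detour_of_precedes hs hpj_once hprec_j h.symm,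
    fun h => hpipj (hs.eq_of_usedArc_from h.2 h.1), ?_⟩
  · exact Routes.not_usedArc_detour_of_lt hstep hs
      (fun k r hr h => (hwin di (by tauto) k r hr h).1)
      (fun k r hr h => (hwin pj (by tauto) k r hr h).2) hinfeas₁
  · exact Routes.not_usedArc_detour_of_lt hstep hs
      (fun k r hr h => (hwin dj (by tauto) k r hr h).1)
      (fun k r hr h => (hwin pi (by tauto) k r hr h).2) hinfeas₂

/-- Validity of the charger valid inequality (Eq. (39)).  Let `di = n+i` and `dj = n+j` be
the drop-off vertices of two requests, `pi` and `pj` their companion pickup vertices, and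
`s` a charger vertex that appears at most once among all routes of a solution.  Suppose
both detour paths are time-window infeasible:
`e(di) + u(di) + t(di,s) + u(s) + t(s,pj) > l(pj)` and
`e(dj) + u(dj) + t(dj,s) + u(s) + t(s,pi) > l(pi)`.
Then, in any solution whose routes admit schedules respecting the time windows at the
pickup/drop-off vertices and the consecutive-vertex timing constraints (and in which each
request is served by a single vehicle, the pickup being visited exactly once and before its
drop-off), at most one of the four arcs `(di → s)`, `(s → pj)`, `(dj → s)`, `(s → pi)`
appears as a consecutive pair on a route.  Hence the valid inequality bounding the total
usage of these four arcs by `1` does not cut off any feasible solution. -/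
theorem charger_valid_inequality {V K : Type*}
    (pi pj di dj s : V)
    (t : V → V → ℝ) (u : V → ℝ) (e l : V → ℝ)
    (ht : ∀ x y, 0 ≤ t x y) (hu : ∀ x, 0 ≤ u x)
    -- the five vertices are pairwise distinct
    (hpipj : pi ≠ pj) (hpidi : pi ≠ di) (hpidj : pi ≠ dj) (hpis : pi ≠ s)
    (hpjdi : pj ≠ di) (hpjdj : pj ≠ dj) (hpjs : pj ≠ s)
    (hdidj : di ≠ dj) (hdis : di ≠ s) (hdjs : dj ≠ s)
    -- both detour paths are time-window infeasible
    (hinfeas₁ : l pj < e di + u di + t di s + u s + t s pj)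
    (hinfeas₂ : l pi < e dj + u dj + t dj s + u s + t s pi)
    -- a solution: a family of routes `v k` of length `m k` with schedules `B k`
    (m : K → ℕ) (v : K → ℕ → V) (B : K → ℕ → ℝ)
    (hstep : ∀ k, ∀ r < m k,
      B k r + u (v k r) + t (v k r) (v k (r + 1)) ≤ B k (r + 1))
    -- time windows hold at the four pickup/drop-off vertices
    (htw : ∀ k, ∀ r ≤ m k,
      (v k r = pi ∨ v k r = pj ∨ v k r = di ∨ v k r = dj) →
        e (v k r) ≤ B k r ∧ B k r ≤ l (v k r))
    -- the charger vertex `s` appears at most once among all routes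
    (hs_once : ∀ k k' r r', r ≤ m k → r' ≤ m k' →
      v k r = s → v k' r' = s → k = k' ∧ r = r')
    -- each pickup vertex is visited at most once among all routes
    (hpi_once : ∀ k k' r r', r ≤ m k → r' ≤ m k' →
      v k r = pi → v k' r' = pi → k = k' ∧ r = r')
    (hpj_once : ∀ k k' r r', r ≤ m k → r' ≤ m k' →
      v k r = pj → v k' r' = pj → k = k' ∧ r = r')
    -- precedence: a drop-off is visited after its pickup on the same route
    (hprec_i : ∀ k, ∀ r ≤ m k, v k r = di → ∃ r' < r, v k r' = pi)
    (hprec_j : ∀ k, ∀ r ≤ m k, v k r = dj → ∃ r' < r, v k r' = pj) :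
    -- at most one of the four arcs is used
    let UsedArc : V → V → Prop :=
      fun x y => ∃ k, ∃ r, r + 1 ≤ m k ∧ v k r = x ∧ v k (r + 1) = y
    ¬(UsedArc di s ∧ UsedArc s pj) ∧ ¬(UsedArc di s ∧ UsedArc dj s) ∧
    ¬(UsedArc di s ∧ UsedArc s pi) ∧ ¬(UsedArc s pj ∧ UsedArc dj s) ∧
    ¬(UsedArc s pj ∧ UsedArc s pi) ∧ ¬(UsedArc dj s ∧ UsedArc s pi) :=
  charger_valid_inequality_general pi pj di dj s t u e l hpipj hdidj hinfeas₁ hinfeas₂ m v B hstep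
    htw hs_once hpi_once hpj_once hprec_i hprec_j
end
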